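/- arXiv:1910.12646 — 2 statements merged into one kernel-verified Lean document; each statement's English description precedes it below -/
import Mathlib

section
/- Let I ⊆ (0,∞) be an open interval and let u: I → ℝ be a differentiable function such that for every α ∈ I, 0 < u(α) < 1 and u(α)³ − u(α)² − (α+1)·u(α) + 1 = 0. Then the function g(α) = f(u(α), α), where f(u,α) = log(u²) − u² + α·log((u−1)²), is strictly monotonically decreasing on I. -/
/-!
Envelope argument: `∂f/∂u = 2/u − 2u + 2α/(u−1) = −2 p(u)/(u(u−1))` vanishes along the branch
of roots, so `g'(α) = ∂f/∂α = log((u(α)−1)²)`, which is negative because `0 < u(α) < 1`.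
-/

open Real

noncomputable def hamiltonian (u α : ℝ) : ℝ :=
  log (u ^ 2) - u ^ 2 + α * log ((u - 1) ^ 2)

theorem hasDerivAt_hamiltonian_comp {u : ℝ → ℝ} {u' α : ℝ} (hu : HasDerivAt u u' α)
    (hu0 : u α ≠ 0) (hu1 : u α ≠ 1) :
    HasDerivAt (fun x => hamiltonian (u x) x)
      ((2 / u α - 2 * u α + 2 * α / (u α - 1)) * u' + log ((u α - 1) ^ 2)) α := by
  have hsub : u α - 1 ≠ 0 := sub_ne_zero.mpr hu1
  have hsq : HasDerivAt (fun x => u x ^ 2) (2 * u α ^ 1 * u') α := hu.pow 2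
  have hsq1 : HasDerivAt (fun x => (u x - 1) ^ 2) (2 * (u α - 1) ^ 1 * u') α :=
    (hu.sub_const 1).pow 2
  refine (((hsq.log (pow_ne_zero 2 hu0)).sub hsq).add
    ((hasDerivAt_id' α).mul (hsq1.log (pow_ne_zero 2 hsub)))).congr_deriv ?_
  field_simp
  ring

theorem hamiltonian_partial_u_eq_zero {u α : ℝ} (hu0 : u ≠ 0) (hu1 : u ≠ 1)
    (hroot : u ^ 3 - u ^ 2 - (α + 1) * u + 1 = 0) :
    2 / u - 2 * u + 2 * α / (u - 1) = 0 := by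
  have hsub : u - 1 ≠ 0 := sub_ne_zero.mpr hu1
  field_simp
  linear_combination -2 * hroot

theorem log_sq_sub_one_neg {u : ℝ} (hu0 : 0 < u) (hu1 : u < 1) : log ((u - 1) ^ 2) < 0 :=
  log_neg (by nlinarith) (by nlinarith)

theorem stmt_13_general (a b : ℝ) (u : ℝ → ℝ)
    (hdiff : ∀ α ∈ Set.Ioo a b, DifferentiableAt ℝ u α)
    (hmem : ∀ α ∈ Set.Ioo a b, 0 < u α ∧ u α < 1)
    (hroot : ∀ α ∈ Set.Ioo a b, (u α) ^ 3 - (u α) ^ 2 - (α + 1) * u α + 1 = 0) :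
    StrictAntiOn (fun α : ℝ => Real.log ((u α) ^ 2) - (u α) ^ 2
      + α * Real.log ((u α - 1) ^ 2)) (Set.Ioo a b) := by
  show StrictAntiOn (fun α => hamiltonian (u α) α) (Set.Ioo a b)
  have hderiv : ∀ α ∈ Set.Ioo a b,
      HasDerivAt (fun x => hamiltonian (u x) x) (log ((u α - 1) ^ 2)) α := by
    intro α hα
    obtain ⟨hu0, hu1⟩ := hmem α hα
    have h := hasDerivAt_hamiltonian_comp (hdiff α hα).hasDerivAt hu0.ne' hu1.ne
    rwa [hamiltonian_partial_u_eq_zero hu0.ne' hu1.ne (hroot α hα), zero_mul, zero_add] at h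
  refine strictAntiOn_of_deriv_neg (convex_Ioo a b)
    (fun α hα => (hderiv α hα).continuousAt.continuousWithinAt) fun α hα => ?_
  rw [interior_Ioo] at hα
  rw [(hderiv α hα).deriv]
  exact log_sq_sub_one_neg (hmem α hα).1 (hmem α hα).2

/-- For a differentiable branch `0 < u(α) < 1` of roots of `p(u) = u³ − u² − (α+1)u + 1`
on an open interval `I ⊆ (0,∞)`, the function `g(α) = f(u(α), α)` with
`f(u,α) = log(u²) − u² + α·log((u−1)²)` is strictly decreasing. -/
theorem stmt_13 (a b : ℝ) (ha : 0 ≤ a) (u : ℝ → ℝ)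
    (hdiff : ∀ α ∈ Set.Ioo a b, DifferentiableAt ℝ u α)
    (hmem : ∀ α ∈ Set.Ioo a b, 0 < u α ∧ u α < 1)
    (hroot : ∀ α ∈ Set.Ioo a b, (u α) ^ 3 - (u α) ^ 2 - (α + 1) * u α + 1 = 0) :
    StrictAntiOn (fun α : ℝ => Real.log ((u α) ^ 2) - (u α) ^ 2
      + α * Real.log ((u α - 1) ^ 2)) (Set.Ioo a b) :=
  stmt_13_general a b u hdiff hmem hroot
end

section
/- Let α > 0 and let u₁ ∈ (−∞,0), u₂ ∈ (0,1), u₃ ∈ (1,∞) be the three real roots of the cubic polynomial p(u) = u³ − u² − (α+1)u + 1. Then f(u₁, α) > f(u₂, α) and f(u₁, α) > f(u₃, α), where f(u,α) = log(u²) − u² + α·log((u−1)²). In particular, among the three collinear fixed configurations, the one at u₁ has the strictly largest Hamiltonian value and is the unique center of the system; the other two are saddles. -/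
/-!
The three roots of `p` sum to `1`, so `u₃ = 1 - u₁ - u₂` lies in `(-u₁, 1 - u₁)`.
Since `p(u) = (u - 1)²(u + 1) - αu`, the negative root satisfies `u₁ < -1`, and then
`u₁ (u₁² - (α + 1)) = u₁² - 1 > 0` gives `u₁² < α + 1`.

* `u₂` versus `u₁`: by `log x ≤ x - 1`, `f(u₂) ≤ -(1 - u₂)² - 1 - 2αu₂ < -1`, while
  `f(u₁) ≥ -u₁² + α log 4 > -(α + 1) + α = -1`.
* `u₃` versus `u₁`: `1 < u₁² < u₃²` and `0 < u₃ - 1 < 1 - u₁`, so both `t ↦ log t - t`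
  (decreasing on `[1, ∞)`) and `α log((u - 1)²)` are larger at `u₁`.
-/

open Real

noncomputable def vortexHamiltonian (α u : ℝ) : ℝ :=
  log (u ^ 2) - u ^ 2 + α * log ((u - 1) ^ 2)

theorem add_add_eq_neg_of_cubic_roots {R : Type*} [CommRing R] [IsDomain R] {b c d x y z : R}
    (hxy : x ≠ y) (hxz : x ≠ z) (hyz : y ≠ z)
    (hx : x ^ 3 + b * x ^ 2 + c * x + d = 0) (hy : y ^ 3 + b * y ^ 2 + c * y + d = 0)
    (hz : z ^ 3 + b * z ^ 2 + c * z + d = 0) :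
    x + y + z = -b := by
  have hxy' : x ^ 2 + x * y + y ^ 2 + b * (x + y) + c = 0 :=
    mul_left_cancel₀ (sub_ne_zero.mpr hxy) (by linear_combination hx - hy)
  have hxz' : x ^ 2 + x * z + z ^ 2 + b * (x + z) + c = 0 :=
    mul_left_cancel₀ (sub_ne_zero.mpr hxz) (by linear_combination hx - hz)
  have : (y - z) * (x + y + z + b) = (y - z) * 0 := by linear_combination hxy' - hxz'
  exact eq_neg_of_add_eq_zero_left (mul_left_cancel₀ (sub_ne_zero.mpr hyz) this)

theorem log_sub_self_lt_log_sub_self {s t : ℝ} (hs : 1 ≤ s) (hst : s < t) :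
    log t - t < log s - s := by
  have hs₀ : 0 < s := by linarith
  have ht₀ : 0 < t := by linarith
  have hlog : log (t / s) < t / s - 1 :=
    log_lt_sub_one_of_pos (by positivity) (by rw [Ne, div_eq_one_iff_eq hs₀.ne']; exact hst.ne')
  have hdiv : t / s - 1 ≤ t - s := by
    rw [div_sub_one hs₀.ne', div_le_iff₀ hs₀]
    nlinarith
  rw [log_div ht₀.ne' hs₀.ne'] at hlog
  linarith

theorem one_lt_log_four : 1 < log 4 := by
  rw [show (4 : ℝ) = 2 ^ 2 by norm_num, log_pow]
  push_cast
  linarith [log_two_gt_d9]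

section Cubic

variable {α u : ℝ}

theorem lt_neg_one_of_cubic_root (hα : 0 < α) (hu : u < 0)
    (hp : u ^ 3 - u ^ 2 - (α + 1) * u + 1 = 0) : u < -1 := by
  by_contra! h
  rw [show u ^ 3 - u ^ 2 - (α + 1) * u + 1 = (u - 1) ^ 2 * (u + 1) - α * u by ring] at hp
  nlinarith [mul_nonneg (sq_nonneg (u - 1)) (neg_le_iff_add_nonneg.mp h),
    mul_pos hα (neg_pos.mpr hu)]

theorem sq_lt_of_cubic_root (hu : u < -1) (hp : u ^ 3 - u ^ 2 - (α + 1) * u + 1 = 0) :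
    u ^ 2 < α + 1 := by
  have : u * (u ^ 2 - (α + 1)) = u ^ 2 - 1 := by linear_combination hp
  nlinarith

end Cubic

section Hamiltonian

variable {α u v : ℝ}

theorem vortexHamiltonian_lt_neg_one (hα : 0 ≤ α) (hu₀ : 0 < u) (hu₁ : u < 1) :
    vortexHamiltonian α u < -1 := by
  have hlog_u : log (u ^ 2) ≤ 2 * (u - 1) := by
    rw [log_pow]; push_cast; linarith [log_le_sub_one_of_pos hu₀]
  have hlog_sub : log ((u - 1) ^ 2) ≤ -2 * u := by
    rw [← neg_sub, neg_sq, log_pow]; push_cast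
    linarith [log_le_sub_one_of_pos (sub_pos.mpr hu₁)]
  unfold vortexHamiltonian
  nlinarith [mul_le_mul_of_nonneg_left hlog_sub hα, mul_nonneg hα hu₀.le]

theorem neg_one_lt_vortexHamiltonian (hα : 0 ≤ α) (hu : u ≤ -1) (hsq : u ^ 2 < α + 1) :
    -1 < vortexHamiltonian α u := by
  have hlog_u : 0 ≤ log (u ^ 2) := log_nonneg (by nlinarith)
  have hlog_sub : log 4 ≤ log ((u - 1) ^ 2) := log_le_log (by norm_num) (by nlinarith)
  unfold vortexHamiltonian
  nlinarith [mul_le_mul_of_nonneg_left (one_lt_log_four.le.trans hlog_sub) hα]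

theorem vortexHamiltonian_lt_vortexHamiltonian (hα : 0 ≤ α) (hv : 1 ≤ v ^ 2)
    (hsq : v ^ 2 < u ^ 2) (hu : u ≠ 1) (hsub : (u - 1) ^ 2 ≤ (v - 1) ^ 2) :
    vortexHamiltonian α u < vortexHamiltonian α v := by
  have hlog : log ((u - 1) ^ 2) ≤ log ((v - 1) ^ 2) :=
    log_le_log (sq_pos_of_ne_zero (sub_ne_zero.mpr hu)) hsub
  unfold vortexHamiltonian
  linarith [log_sub_self_lt_log_sub_self hv hsq, mul_le_mul_of_nonneg_left hlog hα]

end Hamiltonian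

/-- For `α > 0`, among the three real roots `u₁ ∈ (−∞,0)`, `u₂ ∈ (0,1)`, `u₃ ∈ (1,∞)`
of `p(u) = u³ − u² − (α+1)u + 1`, the value of `f(u,α) = log(u²) − u² + α·log((u−1)²)`
is strictly largest at `u₁`: the equilibrium at `u₁` is the unique center. -/
theorem stmt_16 (α u₁ u₂ u₃ : ℝ) (hα : 0 < α)
    (h₁ : u₁ < 0) (h₂ : 0 < u₂ ∧ u₂ < 1) (h₃ : 1 < u₃)
    (hr₁ : u₁ ^ 3 - u₁ ^ 2 - (α + 1) * u₁ + 1 = 0)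
    (hr₂ : u₂ ^ 3 - u₂ ^ 2 - (α + 1) * u₂ + 1 = 0)
    (hr₃ : u₃ ^ 3 - u₃ ^ 2 - (α + 1) * u₃ + 1 = 0) :
    (Real.log (u₂ ^ 2) - u₂ ^ 2 + α * Real.log ((u₂ - 1) ^ 2)
      < Real.log (u₁ ^ 2) - u₁ ^ 2 + α * Real.log ((u₁ - 1) ^ 2)) ∧
    (Real.log (u₃ ^ 2) - u₃ ^ 2 + α * Real.log ((u₃ - 1) ^ 2)
      < Real.log (u₁ ^ 2) - u₁ ^ 2 + α * Real.log ((u₁ - 1) ^ 2)) := by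
  obtain ⟨h₂₀, h₂₁⟩ := h₂
  have hu₁ : u₁ < -1 := lt_neg_one_of_cubic_root hα h₁ hr₁
  have hsum : u₁ + u₂ + u₃ = 1 := by
    simpa using add_add_eq_neg_of_cubic_roots (b := -1) (c := -(α + 1)) (d := 1)
      (show u₁ ≠ u₂ by linarith) (show u₁ ≠ u₃ by linarith) (show u₂ ≠ u₃ by linarith)
      (by linear_combination hr₁) (by linear_combination hr₂) (by linear_combination hr₃)
  refine ⟨?_, ?_⟩
  · exact (vortexHamiltonian_lt_neg_one hα.le h₂₀ h₂₁).trans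
      (neg_one_lt_vortexHamiltonian hα.le hu₁.le (sq_lt_of_cubic_root hu₁ hr₁))
  · exact vortexHamiltonian_lt_vortexHamiltonian hα.le (by nlinarith) (by nlinarith)
      h₃.ne' (by nlinarith)
end
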